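/- If f : C → D is a chain homotopy equivalence of chain complexes of R-modules, then the mapping cone of f is chain contractible. -/

import Mathlib

/-!
Let `k₁ : 1 ≃ f'f` and `k₂ : 1 ≃ ff'` be the two homotopies. On the cone, the naive candidate
`(y, x) ↦ (k₂ y, f' y - k₁ x)` already contracts the `C`-component; its failure on the
`D`-component is measured by `θ = f k₁ - k₂ f` (`homotopyDiff`), which anticommutes with the differentials because
both `f k₁` and `k₂ f` are homotopies `ff'f ≃ f`. Adding `θ` applied to the `C`-component of the
candidate corrects the `D`-component, and the anticommutation turns the correction term into
`θ x`, which cancels the defect exactly.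
-/

namespace ChainCone

variable {R : Type*} [Ring R] {C D : ℤ → Type*}
  [∀ i, AddCommGroup (C i)] [∀ i, Module R (C i)] [∀ i, AddCommGroup (D i)] [∀ i, Module R (D i)]
  (dC : ∀ i, C (i + 1) →ₗ[R] C i) (dD : ∀ i, D (i + 1) →ₗ[R] D i)
  (f : ∀ i, C i →ₗ[R] D i) (f' : ∀ i, D i →ₗ[R] C i)
  (k₁ : ∀ i, C i →ₗ[R] C (i + 1)) (k₂ : ∀ i, D i →ₗ[R] D (i + 1))

def homotopyDiff (i : ℤ) : C i →ₗ[R] D (i + 1) :=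
  f (i + 1) ∘ₗ k₁ i - k₂ i ∘ₗ f i

theorem homotopyDiff_anticomm
    (hf : ∀ i (x : C (i + 1)), f i (dC i x) = dD i (f (i + 1) x))
    (hk₁ : ∀ i (x : C (i + 1)),
      dC (i + 1) (k₁ (i + 1) x) + k₁ i (dC i x) = x - f' (i + 1) (f (i + 1) x))
    (hk₂ : ∀ i (y : D (i + 1)),
      dD (i + 1) (k₂ (i + 1) y) + k₂ i (dD i y) = y - f (i + 1) (f' (i + 1) y))
    (i : ℤ) (x : C (i + 1)) :
    dD (i + 1) (homotopyDiff f k₁ k₂ (i + 1) x) + homotopyDiff f k₁ k₂ i (dC i x) = 0 := by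
  have hfk₁ : f (i + 1) (dC (i + 1) (k₁ (i + 1) x)) + f (i + 1) (k₁ i (dC i x))
      = f (i + 1) x - f (i + 1) (f' (i + 1) (f (i + 1) x)) := by
    rw [← map_add, hk₁, map_sub]
  simp only [homotopyDiff, LinearMap.sub_apply, LinearMap.comp_apply, map_sub]
  rw [← hf (i + 1), hf i]
  linear_combination (norm := module) hfk₁ - hk₂ i (f (i + 1) x)

def coneContraction (i : ℤ) : (D (i + 1) × C i) →ₗ[R] (D (i + 1 + 1) × C (i + 1)) :=
  let g := f' (i + 1) ∘ₗ LinearMap.fst R _ _ - k₁ i ∘ₗ LinearMap.snd R _ _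
  (k₂ (i + 1) ∘ₗ LinearMap.fst R _ _ + homotopyDiff f k₁ k₂ (i + 1) ∘ₗ g).prod g

theorem coneContraction_apply (i : ℤ) (y : D (i + 1)) (x : C i) :
    coneContraction f f' k₁ k₂ i (y, x) =
      (k₂ (i + 1) y + homotopyDiff f k₁ k₂ (i + 1) (f' (i + 1) y - k₁ i x),
        f' (i + 1) y - k₁ i x) :=
  rfl

theorem coneContraction_snd
    (hf' : ∀ i (y : D (i + 1)), f' i (dD i y) = dC i (f' (i + 1) y))
    (hk₁ : ∀ i (x : C (i + 1)),
      dC (i + 1) (k₁ (i + 1) x) + k₁ i (dC i x) = x - f' (i + 1) (f (i + 1) x))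
    (i : ℤ) (y : D (i + 1 + 1)) (x : C (i + 1)) :
    -dC (i + 1) (coneContraction f f' k₁ k₂ (i + 1) (y, x)).2
      + (coneContraction f f' k₁ k₂ i (dD (i + 1) y + f (i + 1) x, -dC i x)).2 = x := by
  simp only [coneContraction_apply, map_sub, map_add, map_neg, hf']
  linear_combination (norm := module) hk₁ i x

theorem coneContraction_fst
    (hf : ∀ i (x : C (i + 1)), f i (dC i x) = dD i (f (i + 1) x))
    (hf' : ∀ i (y : D (i + 1)), f' i (dD i y) = dC i (f' (i + 1) y))
    (hk₁ : ∀ i (x : C (i + 1)),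
      dC (i + 1) (k₁ (i + 1) x) + k₁ i (dC i x) = x - f' (i + 1) (f (i + 1) x))
    (hk₂ : ∀ i (y : D (i + 1)),
      dD (i + 1) (k₂ (i + 1) y) + k₂ i (dD i y) = y - f (i + 1) (f' (i + 1) y))
    (i : ℤ) (y : D (i + 1 + 1)) (x : C (i + 1)) :
    dD (i + 1 + 1) (coneContraction f f' k₁ k₂ (i + 1) (y, x)).1
        + f (i + 1 + 1) (coneContraction f f' k₁ k₂ (i + 1) (y, x)).2
      + (coneContraction f f' k₁ k₂ i (dD (i + 1) y + f (i + 1) x, -dC i x)).1 = y := by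
  have hsnd := neg_add_eq_iff_eq_add.mp (coneContraction_snd dC dD f f' k₁ k₂ hf' hk₁ i y x)
  have hθ := homotopyDiff_anticomm dC dD f f' k₁ k₂ hf hk₁ hk₂ (i + 1)
    (coneContraction f f' k₁ k₂ (i + 1) (y, x)).2
  simp only [coneContraction_apply] at hsnd hθ ⊢
  rw [hsnd]
  simp only [homotopyDiff, map_add, map_sub, LinearMap.sub_apply, LinearMap.comp_apply] at hθ ⊢
  linear_combination (norm := module) hθ + hk₂ (i + 1) y

end ChainCone

theorem stmt_2_general (R : Type*) [Ring R]
    (C D : ℤ → Type*) [∀ i, AddCommGroup (C i)] [∀ i, Module R (C i)]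
    [∀ i, AddCommGroup (D i)] [∀ i, Module R (D i)]
    (dC : ∀ i, C (i + 1) →ₗ[R] C i) (dD : ∀ i, D (i + 1) →ₗ[R] D i)
    (f : ∀ i, C i →ₗ[R] D i)
    (hf : ∀ i (x : C (i + 1)), f i (dC i x) = dD i (f (i + 1) x))
    -- `f` is a chain homotopy equivalence, with homotopy inverse `f'`
    (f' : ∀ i, D i →ₗ[R] C i)
    (hf' : ∀ i (y : D (i + 1)), f' i (dD i y) = dC i (f' (i + 1) y))
    (k₁ : ∀ i, C i →ₗ[R] C (i + 1))
    (hk₁ : ∀ i (x : C (i + 1)),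
      dC (i + 1) (k₁ (i + 1) x) + k₁ i (dC i x) = x - f' (i + 1) (f (i + 1) x))
    (k₂ : ∀ i, D i →ₗ[R] D (i + 1))
    (hk₂ : ∀ i (y : D (i + 1)),
      dD (i + 1) (k₂ (i + 1) y) + k₂ i (dD i y) = y - f (i + 1) (f' (i + 1) y)) :
    -- conclusion : `cone(f)` admits a chain contraction
    ∃ s : ∀ i, (D (i + 1) × C i) →ₗ[R] (D (i + 1 + 1) × C (i + 1)),
      ∀ i (y : D (i + 1 + 1)) (x : C (i + 1)),
        (dD (i + 1 + 1) (s (i + 1) (y, x)).1 + f (i + 1 + 1) (s (i + 1) (y, x)).2,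
            -(dC (i + 1) (s (i + 1) (y, x)).2))
          + s i (dD (i + 1) y + f (i + 1) x, -(dC i x)) = (y, x) :=
  ⟨ChainCone.coneContraction f f' k₁ k₂, fun i y x =>
    Prod.ext (ChainCone.coneContraction_fst dC dD f f' k₁ k₂ hf hf' hk₁ hk₂ i y x)
      (ChainCone.coneContraction_snd dC dD f f' k₁ k₂ hf' hk₁ i y x)⟩

/-- The mapping cone of a chain homotopy equivalence is chain contractible.
Here `cone(f)` in degree `i+1` is `D (i+1) × C i` with differential
`(y, x) ↦ (d y + f x, -d x)`, and a contraction is a degree `+1` map `s`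
with `ds + sd = 1`. -/
theorem stmt_2 (R : Type*) [Ring R]
    (C D : ℤ → Type*) [∀ i, AddCommGroup (C i)] [∀ i, Module R (C i)]
    [∀ i, AddCommGroup (D i)] [∀ i, Module R (D i)]
    (dC : ∀ i, C (i + 1) →ₗ[R] C i) (dD : ∀ i, D (i + 1) →ₗ[R] D i)
    (hdC : ∀ i (x : C (i + 1 + 1)), dC i (dC (i + 1) x) = 0)
    (hdD : ∀ i (y : D (i + 1 + 1)), dD i (dD (i + 1) y) = 0)
    (f : ∀ i, C i →ₗ[R] D i)
    (hf : ∀ i (x : C (i + 1)), f i (dC i x) = dD i (f (i + 1) x))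
    -- `f` is a chain homotopy equivalence, with homotopy inverse `f'`
    (f' : ∀ i, D i →ₗ[R] C i)
    (hf' : ∀ i (y : D (i + 1)), f' i (dD i y) = dC i (f' (i + 1) y))
    (k₁ : ∀ i, C i →ₗ[R] C (i + 1))
    (hk₁ : ∀ i (x : C (i + 1)),
      dC (i + 1) (k₁ (i + 1) x) + k₁ i (dC i x) = x - f' (i + 1) (f (i + 1) x))
    (k₂ : ∀ i, D i →ₗ[R] D (i + 1))
    (hk₂ : ∀ i (y : D (i + 1)),
      dD (i + 1) (k₂ (i + 1) y) + k₂ i (dD i y) = y - f (i + 1) (f' (i + 1) y)) :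
    -- conclusion : `cone(f)` admits a chain contraction
    ∃ s : ∀ i, (D (i + 1) × C i) →ₗ[R] (D (i + 1 + 1) × C (i + 1)),
      ∀ i (y : D (i + 1 + 1)) (x : C (i + 1)),
        (dD (i + 1 + 1) (s (i + 1) (y, x)).1 + f (i + 1 + 1) (s (i + 1) (y, x)).2,
            -(dC (i + 1) (s (i + 1) (y, x)).2))
          + s i (dD (i + 1) y + f (i + 1) x, -(dC i x)) = (y, x) :=
  stmt_2_general R C D dC dD f hf f' hf' k₁ hk₁ k₂ hk₂
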